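/- arXiv:2205.11176 — 4 statements merged into one kernel-verified Lean document; each statement's English description precedes it below -/
import Mathlib

section
/- Let L₁ and L₂ be principal 𝕋-bundles and let T : C₀^𝕋(L₁) → C₀^𝕋(L₂) be a (not necessarily continuous) linear orthogonality preserving map. Let ψ : L₂^{nz} → L̂₁ be any map with ψ(s) ∈ supp(δ_s∘T) for all s ∈ L₂^{nz}. Then the map s ↦ q₁(ψ(s)) from L₂^{nz} (with the subspace topology) to the quotient L̂₁/𝕋 is continuous. -/
open scoped ZeroAtInfty

noncomputable section

/-- A principal `𝕋`-bundle: a `𝕋`-symmetric subset `L` of an ambient complex topological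
vector space not containing `0` such that `L ∪ {0}` is compact. -/
structure TBundle (E : Type*) [AddCommGroup E] [Module ℂ E] [TopologicalSpace E] where
  carrier : Set E
  smul_mem : ∀ z : ℂ, ‖z‖ = 1 → ∀ t ∈ carrier, z • t ∈ carrier
  zero_not_mem : (0 : E) ∉ carrier
  isCompact_union : IsCompact (carrier ∪ {0})

variable {E F : Type*} [AddCommGroup E] [Module ℂ E] [TopologicalSpace E]
  [AddCommGroup F] [Module ℂ F] [TopologicalSpace F]

/-- `L̂ = L ∪ {0}`. -/
def TBundle.hat (L : TBundle E) : Set E := L.carrier ∪ {0}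

/-- A subset `S` is `𝕋`-symmetric if `𝕋S = S`. -/
def TSymm (S : Set E) : Prop := ∀ z : ℂ, ‖z‖ = 1 → ∀ x ∈ S, z • x ∈ S

/-- Rotation of a point of `L` by a unimodular scalar. -/
def TBundle.sm (L : TBundle E) (z : ℂ) (hz : ‖z‖ = 1) (t : L.carrier) : L.carrier :=
  ⟨z • (t : E), L.smul_mem z hz t t.2⟩

theorem TBundle.hat_smul_mem (L : TBundle E) (z : ℂ) (hz : ‖z‖ = 1) {x : E}
    (hx : x ∈ L.hat) : z • x ∈ L.hat := by
  rcases hx with hx | hx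
  · exact Or.inl (L.smul_mem z hz x hx)
  · simp only [Set.mem_singleton_iff] at hx
    subst hx
    right; simp

/-- Rotation of a point of `L̂` by a unimodular scalar. -/
def TBundle.hsm (L : TBundle E) (z : ℂ) (hz : ‖z‖ = 1) (t : L.hat) : L.hat :=
  ⟨z • (t : E), L.hat_smul_mem z hz t.2⟩

/-- The commutative JB*-triple `C₀^𝕋(L)` of `𝕋`-equivariant elements of `C₀(L, ℂ)`,
as a (closed) submodule of `C₀(L, ℂ)`. -/
def TBundle.C0T (L : TBundle E) : Submodule ℂ C₀(↥L.carrier, ℂ) where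
  carrier := {a | ∀ (z : ℂ) (hz : ‖z‖ = 1) (t : L.carrier), a (L.sm z hz t) = z * a t}
  add_mem' := by
    intro a b ha hb z hz t
    simp [ha z hz t, hb z hz t, mul_add]
  zero_mem' := by intro z hz t; simp
  smul_mem' := by
    intro c a ha z hz t
    simp [ha z hz t]
    ring

/-- `T` preserves orthogonality: functions with zero pointwise product are mapped to
functions with zero pointwise product. -/
def OrthogonalityPreserving (L₁ : TBundle E) (L₂ : TBundle F)
    (T : L₁.C0T →ₗ[ℂ] L₂.C0T) : Prop :=
  ∀ a b : L₁.C0T, (∀ t : L₁.carrier, a.1 t * b.1 t = 0) →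
    ∀ s : L₂.carrier, (T a).1 s * (T b).1 s = 0

/-- The support of the functional `δ_s ∘ T`: all `t ∈ L̂₁` such that every `𝕋`-symmetric
relatively open neighbourhood `U` of `t` in `L̂₁` contains the cozero set of some
`a ∈ C₀^𝕋(L₁)` with `T(a)(s) ≠ 0`. -/
def suppDelta {L₁ : TBundle E} {L₂ : TBundle F} (T : L₁.C0T →ₗ[ℂ] L₂.C0T)
    (s : L₂.carrier) : Set E :=
  {t | t ∈ L₁.hat ∧ ∀ U : Set E, t ∈ U → TSymm U →
      (∃ V : Set E, IsOpen V ∧ U = V ∩ L₁.hat) →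
      ∃ a : L₁.C0T, (∀ x : L₁.carrier, (x : E) ∉ U → a.1 x = 0) ∧ (T a).1 s ≠ 0}

/-- The set `L₂^z` of points where `δ_s ∘ T` vanishes. -/
def Lzero {L₁ : TBundle E} {L₂ : TBundle F} (T : L₁.C0T →ₗ[ℂ] L₂.C0T) :
    Set L₂.carrier :=
  {s | ∀ a : L₁.C0T, (T a).1 s = 0}

/-- The set `L₂^d` of points where `δ_s ∘ T` is discontinuous (w.r.t. the sup norm). -/
def Ldisc {L₁ : TBundle E} {L₂ : TBundle F} (T : L₁.C0T →ₗ[ℂ] L₂.C0T) :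
    Set L₂.carrier :=
  {s | ¬ Continuous fun a : L₁.C0T => (T a).1 s}

/-- The set `L₂^{nz}` of points where `δ_s ∘ T` is nonzero. -/
def Lnz {L₁ : TBundle E} {L₂ : TBundle F} (T : L₁.C0T →ₗ[ℂ] L₂.C0T) :
    Set L₂.carrier :=
  {s | ∃ a : L₁.C0T, (T a).1 s ≠ 0}

/-- The set `L₂^c` of points where `δ_s ∘ T` is nonzero and norm-continuous. -/
def Lcont {L₁ : TBundle E} {L₂ : TBundle F} (T : L₁.C0T →ₗ[ℂ] L₂.C0T) :
    Set L₂.carrier :=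
  {s | (∃ a : L₁.C0T, (T a).1 s ≠ 0) ∧ Continuous fun a : L₁.C0T => (T a).1 s}

/-- The `𝕋`-orbit of a point. -/
def Torbit (t : E) : Set E := {x | ∃ z : ℂ, ‖z‖ = 1 ∧ x = z • t}

/-- The equivalence relation on `L̂` identifying points of the same `𝕋`-orbit. -/
def TBundle.orbitSetoid (L : TBundle E) : Setoid ↥L.hat where
  r t₁ t₂ := ∃ z : ℂ, ‖z‖ = 1 ∧ (t₂ : E) = z • (t₁ : E)
  iseqv := by
    constructor
    · intro t; exact ⟨1, by simp, by simp⟩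
    · rintro t₁ t₂ ⟨z, hz, h⟩
      have hz0 : z ≠ 0 := by intro h0; rw [h0] at hz; simp at hz
      refine ⟨z⁻¹, by simp [hz], ?_⟩
      rw [h, smul_smul, inv_mul_cancel₀ hz0, one_smul]
    · rintro t₁ t₂ t₃ ⟨z, hz, h⟩ ⟨w, hw, h'⟩
      exact ⟨w * z, by simp [hz, hw], by rw [h', h, smul_smul]⟩

/-- The cozero set of an element of `C₀^𝕋(L)`, as a subset of the ambient space. -/
def coz {L : TBundle E} (a : L.C0T) : Set E := (↑) '' {t : L.carrier | a.1 t ≠ 0}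

/-!
If `q₁(ψ s)` lies in an open set `W`, the points of `L̂₁` whose class lies outside `W` form a
compact `𝕋`-symmetric set `C` disjoint from the orbit of `ψ s`, so the two have disjoint open
`𝕋`-symmetric neighbourhoods `U` and `V`. Some `a` supported in `U` has `T(a)(s) ≠ 0`, hence
`T(a)(s') ≠ 0` for `s'` near `s`. Any `b` supported in `V` is orthogonal to `a`, so `T(b)(s') = 0`:
the support of `δ_{s'} ∘ T` misses `V`, and therefore `ψ(s') ∉ C`.
-/

open Topology

section TSymm

variable {M : Type*} [AddCommGroup M] [Module ℂ M]

def tSymmCore (U : Set M) : Set M := {x | ∀ z : ℂ, ‖z‖ = 1 → z • x ∈ U}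

theorem tSymmCore_subset (U : Set M) : tSymmCore U ⊆ U := fun x hx => by
  simpa using hx 1 (by simp)

theorem tSymm_tSymmCore (U : Set M) : TSymm (tSymmCore U) := fun z hz x hx w hw => by
  rw [smul_smul]
  exact hx (w * z) (by rw [norm_mul, hw, hz, one_mul])

theorem TSymm.subset_tSymmCore {K U : Set M} (hK : TSymm K) (hKU : K ⊆ U) :
    K ⊆ tSymmCore U := fun _ hx z hz => hKU (hK z hz _ hx)

theorem TSymm.inter {S S' : Set M} (hS : TSymm S) (hS' : TSymm S') : TSymm (S ∩ S') :=
  fun z hz x hx => ⟨hS z hz x hx.1, hS' z hz x hx.2⟩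

theorem TSymm.disjoint_torbit {S : Set M} (hS : TSymm S) {t : M} (ht : t ∉ S) :
    Disjoint (Torbit t) S := by
  rw [Set.disjoint_left]
  rintro _ ⟨z, hz, rfl⟩ hzt
  have hz0 : z ≠ 0 := by rintro rfl; simp at hz
  refine ht ?_
  simpa [smul_smul, hz0] using hS z⁻¹ (by simp [hz]) _ hzt

theorem tSymm_torbit (t : M) : TSymm (Torbit t) := by
  rintro z hz _ ⟨w, hw, rfl⟩
  exact ⟨z * w, by simp [hz, hw], smul_smul z w t⟩

theorem mem_torbit_self (t : M) : t ∈ Torbit t := ⟨1, by simp, by simp⟩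

end TSymm

theorem isOpen_tSymmCore [ContinuousSMul ℂ E] {U : Set E} (hU : IsOpen U) :
    IsOpen (tSymmCore U) := by
  refine isOpen_iff_mem_nhds.2 fun x₀ hx₀ => ?_
  have hcore : ∀ᶠ x in 𝓝 x₀, ∀ z ∈ Metric.sphere (0 : ℂ) 1, z • x ∈ U :=
    (isCompact_sphere 0 1).eventually_forall_of_forall_eventually fun z hz =>
      (continuous_snd.smul continuous_fst).continuousAt.preimage_mem_nhds
        (hU.mem_nhds (hx₀ z (by simpa using hz)))
  filter_upwards [hcore] with x hx z hz using hx z (by simpa using hz)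

theorem isCompact_torbit [ContinuousSMul ℂ E] (t : E) : IsCompact (Torbit t) := by
  have horbit : Torbit t = (· • t) '' Metric.sphere (0 : ℂ) 1 := by
    ext x
    simp [Torbit, eq_comm]
  rw [horbit]
  exact (isCompact_sphere 0 1).image (continuous_id.smul continuous_const)

theorem exists_isOpen_tSymm_separating [ContinuousSMul ℂ E] [T2Space E] {K C : Set E}
    (hK : IsCompact K) (hC : IsCompact C) (hKs : TSymm K) (hCs : TSymm C)
    (hKC : Disjoint K C) :
    ∃ U V : Set E, IsOpen U ∧ IsOpen V ∧ TSymm U ∧ TSymm V ∧ K ⊆ U ∧ C ⊆ V ∧ Disjoint U V := by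
  obtain ⟨U, V, hU, hV, hKU, hCV, hUV⟩ := SeparatedNhds.of_isCompact_isCompact hK hC hKC
  exact ⟨tSymmCore U, tSymmCore V, isOpen_tSymmCore hU, isOpen_tSymmCore hV,
    tSymm_tSymmCore U, tSymm_tSymmCore V, hKs.subset_tSymmCore hKU, hCs.subset_tSymmCore hCV,
    hUV.mono (tSymmCore_subset U) (tSymmCore_subset V)⟩

namespace TBundle

theorem tSymm_hat (L : TBundle E) : TSymm L.hat := fun z hz _ hx => L.hat_smul_mem z hz hx

theorem mk_hsm (L : TBundle E) (z : ℂ) (hz : ‖z‖ = 1) (t : L.hat) :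
    Quotient.mk L.orbitSetoid (L.hsm z hz t) = Quotient.mk L.orbitSetoid t :=
  Quotient.sound (L.orbitSetoid.symm ⟨z, hz, rfl⟩)

theorem tSymm_image_preimage_mk (L : TBundle E) (S : Set (Quotient L.orbitSetoid)) :
    TSymm (((↑) : L.hat → E) '' (Quotient.mk L.orbitSetoid ⁻¹' S)) := by
  rintro z hz _ ⟨t, ht, rfl⟩
  exact ⟨L.hsm z hz t, by rwa [Set.mem_preimage, mk_hsm], rfl⟩

theorem isCompact_image_preimage_mk (L : TBundle E) {S : Set (Quotient L.orbitSetoid)}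
    (hS : IsClosed S) : IsCompact (((↑) : L.hat → E) '' (Quotient.mk L.orbitSetoid ⁻¹' S)) := by
  have : CompactSpace L.hat := isCompact_iff_compactSpace.mp L.isCompact_union
  exact (hS.preimage continuous_quotient_mk').isCompact.image continuous_subtype_val

end TBundle

section Support

variable {L₁ : TBundle E} {L₂ : TBundle F} {T : L₁.C0T →ₗ[ℂ] L₂.C0T}

theorem exists_vanishing_off_of_mem_suppDelta {s : L₂.carrier} {t : E} {U : Set E}
    (ht : t ∈ suppDelta T s) (hU : IsOpen U) (hUs : TSymm U) (htU : t ∈ U) :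
    ∃ a : L₁.C0T, (∀ x : L₁.carrier, (x : E) ∉ U → a.1 x = 0) ∧ (T a).1 s ≠ 0 := by
  obtain ⟨a, ha, hTa⟩ := ht.2 (U ∩ L₁.hat) ⟨htU, ht.1⟩ (hUs.inter L₁.tSymm_hat) ⟨U, hU, rfl⟩
  exact ⟨a, fun x hx => ha x fun hxU => hx hxU.1, hTa⟩

theorem OrthogonalityPreserving.eventually_disjoint_suppDelta
    (hT : OrthogonalityPreserving L₁ L₂ T) {s : L₂.carrier} {t : E} {U V : Set E}
    (ht : t ∈ suppDelta T s) (hU : IsOpen U) (hUs : TSymm U) (htU : t ∈ U)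
    (hV : IsOpen V) (hVs : TSymm V) (hUV : Disjoint U V) :
    ∀ᶠ s' in 𝓝 s, Disjoint (suppDelta T s') V := by
  obtain ⟨a, ha, hTa⟩ := exists_vanishing_off_of_mem_suppDelta ht hU hUs htU
  filter_upwards [(T a).1.continuous.continuousAt.eventually_ne hTa] with s' hTas'
  refine Set.disjoint_left.2 fun t' ht' ht'V => ?_
  obtain ⟨b, hb, hTb⟩ := exists_vanishing_off_of_mem_suppDelta ht' hV hVs ht'V
  have hab : ∀ x : L₁.carrier, a.1 x * b.1 x = 0 := fun x => by
    by_cases hxU : (x : E) ∈ U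
    · rw [hb x (Set.disjoint_left.1 hUV hxU), mul_zero]
    · rw [ha x hxU, zero_mul]
  exact mul_ne_zero hTas' hTb (hT a b hab s')

end Support

section MainStatements

variable [IsTopologicalAddGroup E] [ContinuousSMul ℂ E] [T2Space E]
  [Module ℝ E] [IsScalarTower ℝ ℂ E] [LocallyConvexSpace ℝ E]
  [IsTopologicalAddGroup F] [ContinuousSMul ℂ F] [T2Space F]
  [Module ℝ F] [IsScalarTower ℝ ℂ F] [LocallyConvexSpace ℝ F]

/-- For a linear orthogonality preserving map
`T : C₀^𝕋(L₁) → C₀^𝕋(L₂)`, any selection `ψ` of `s ↦ supp(δ_s ∘ T)` on `L₂^{nz}`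
induces a continuous map `s ↦ q₁(ψ(s))` from `L₂^{nz}` to `L̂₁/𝕋`. -/
theorem quotient_selection_continuousOn (L₁ : TBundle E) (L₂ : TBundle F)
    (T : L₁.C0T →ₗ[ℂ] L₂.C0T) (hT : OrthogonalityPreserving L₁ L₂ T)
    (ψ : L₂.carrier → ↥L₁.hat) (hψ : ∀ s ∈ Lnz T, (ψ s : E) ∈ suppDelta T s) :
    ContinuousOn (fun s => Quotient.mk L₁.orbitSetoid (ψ s)) (Lnz T) := by
  intro s hs
  refine (nhds_basis_opens _).tendsto_right_iff.2 fun W ⟨hsW, hW⟩ => ?_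
  set C : Set E := (↑) '' (Quotient.mk L₁.orbitSetoid ⁻¹' Wᶜ)
  have hCs : TSymm C := L₁.tSymm_image_preimage_mk Wᶜ
  have hsC : (ψ s : E) ∉ C := by
    rintro ⟨t, ht, htψ⟩
    exact ht (Subtype.ext htψ ▸ hsW)
  obtain ⟨U, V, hU, hV, hUs, hVs, horbitU, hCV, hUV⟩ :=
    exists_isOpen_tSymm_separating (isCompact_torbit _)
      (L₁.isCompact_image_preimage_mk hW.isClosed_compl) (tSymm_torbit _) hCs
      (hCs.disjoint_torbit hsC)
  filter_upwards [nhdsWithin_le_nhds (hT.eventually_disjoint_suppDelta (hψ s hs) hU hUs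
    (horbitU (mem_torbit_self _)) hV hVs hUV), self_mem_nhdsWithin] with s' hdisj hs'
  by_contra hs'W
  exact Set.disjoint_left.1 hdisj (hψ s' hs') (hCV ⟨ψ s', hs'W, rfl⟩)

end MainStatements
end
end

section
/- With L₁, L₂, T, L₂^c, r, φ as in the context: the function r is globally bounded, i.e., sup{ r(s) : s ∈ L₂^c } < ∞; equivalently, the set { ‖δ_s∘T‖ : s ∈ L₂^c } of operator norms of the continuous functionals δ_s∘T is bounded. -/
open scoped ZeroAtInfty

noncomputable section

variable {E F : Type*} [AddCommGroup E] [Module ℂ E] [TopologicalSpace E]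
  [AddCommGroup F] [Module ℂ F] [TopologicalSpace F]

/-!
Since `C₀^𝕋(L₁)` is a closed subspace of `C₀(L₁)`, it is a Banach space, and for `s ∈ L₂^c` the
continuous functionals `δ_s ∘ T` are pointwise bounded: `|T(a)(s)| ≤ ‖T a‖`. By the uniform
boundedness principle their norms are bounded by some `M`. On the other hand
`‖δ_s ∘ T‖ ≥ r(s)`: some `a` has `a(φ(s)) ≠ 0`, and rescaling `a` pointwise by
`(max ‖a(·)‖ ‖a(φ(s))‖)⁻¹`, a factor that depends only on `|a|` and so respects `𝕋`-equivariance,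
gives an element of `C₀^𝕋(L₁)` of norm `1` attaining its norm at `φ(s)`.
-/

namespace ZeroAtInftyContinuousMap

open scoped BoundedContinuousFunction

variable {X V : Type*} [TopologicalSpace X]

lemma norm_apply_le [SeminormedAddCommGroup V] (f : C₀(X, V)) (x : X) : ‖f x‖ ≤ ‖f‖ := by
  rw [← norm_toBCF_eq_norm]
  exact f.toBCF.norm_coe_le_norm x

protected lemma continuous_eval_const [SeminormedAddCommGroup V] (x : X) :
    Continuous fun f : C₀(X, V) => f x :=
  (continuous_eval_const (F := X →ᵇ V) x).comp isometry_toBCF.continuous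

theorem exists_norm_apply_le_of_continuous_apply {𝕜 W : Type*} [NontriviallyNormedField 𝕜]
    [NormedAddCommGroup W] [NormedSpace 𝕜 W] [CompleteSpace W]
    [NormedAddCommGroup V] [NormedSpace 𝕜 V] (T : W →ₗ[𝕜] C₀(X, V)) :
    ∃ M, ∀ x, Continuous (fun w => T w x) → ∀ w, ‖T w x‖ ≤ M * ‖w‖ := by
  let evalT : {x // Continuous fun w => T w x} → W →L[𝕜] V := fun x =>
    { toFun := fun w => T w x
      map_add' := by simp
      map_smul' := by simp
      cont := x.2 }
  obtain ⟨M, hM⟩ := banach_steinhaus (g := evalT) fun w => ⟨‖T w‖, fun x => norm_apply_le _ _⟩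
  exact ⟨M, fun x hx w => (evalT ⟨x, hx⟩).le_of_opNorm_le (hM _) w⟩

variable [NormedAddCommGroup V] [NormedSpace ℝ V]

def radialClip (f : C₀(X, V)) {c : ℝ} (hc : 0 < c) : C₀(X, V) where
  toFun x := (max ‖f x‖ c)⁻¹ • f x
  continuous_toFun :=
    ((f.continuous.norm.max continuous_const).inv₀ fun _ => (lt_max_of_lt_right hc).ne').smul
      f.continuous
  zero_at_infty' := by
    have hf := f.zero_at_infty'
    simpa [max_eq_right hc.le] using
      ((hf.norm.max tendsto_const_nhds).inv₀ (lt_max_of_lt_right hc).ne').smul hf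

@[simp]
lemma radialClip_apply (f : C₀(X, V)) {c : ℝ} (hc : 0 < c) (x : X) :
    f.radialClip hc x = (max ‖f x‖ c)⁻¹ • f x :=
  rfl

lemma norm_radialClip_apply (f : C₀(X, V)) {c : ℝ} (hc : 0 < c) (x : X) :
    ‖f.radialClip hc x‖ = ‖f x‖ / max ‖f x‖ c := by
  have hpos : 0 < max ‖f x‖ c := lt_max_of_lt_right hc
  rw [radialClip_apply, norm_smul, norm_inv, Real.norm_of_nonneg hpos.le, inv_mul_eq_div]

lemma norm_radialClip_le_one (f : C₀(X, V)) {c : ℝ} (hc : 0 < c) : ‖f.radialClip hc‖ ≤ 1 := by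
  rw [← norm_toBCF_eq_norm]
  refine (BoundedContinuousFunction.norm_le zero_le_one).mpr fun x => ?_
  have hpos : 0 < max ‖f x‖ c := lt_max_of_lt_right hc
  show ‖f.radialClip hc x‖ ≤ 1
  rw [norm_radialClip_apply, div_le_one hpos]
  exact le_max_left _ _

end ZeroAtInftyContinuousMap

namespace TBundle

open ZeroAtInftyContinuousMap

variable (L : TBundle E)

lemma isClosed_C0T : IsClosed (L.C0T : Set C₀(L.carrier, ℂ)) := by
  have : (L.C0T : Set C₀(L.carrier, ℂ)) =
      ⋂ (z : ℂ) (hz : ‖z‖ = 1) (t : L.carrier), {a | a (L.sm z hz t) = z * a t} := by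
    ext a
    simp only [Set.mem_iInter]
    rfl
  rw [this]
  exact isClosed_iInter fun z => isClosed_iInter fun hz => isClosed_iInter fun t =>
    isClosed_eq (ZeroAtInftyContinuousMap.continuous_eval_const _)
      (continuous_const.mul (ZeroAtInftyContinuousMap.continuous_eval_const t))

instance : CompleteSpace L.C0T :=
  L.isClosed_C0T.completeSpace_coe

lemma radialClip_mem_C0T {a : C₀(L.carrier, ℂ)} (ha : a ∈ L.C0T) {c : ℝ} (hc : 0 < c) :
    a.radialClip hc ∈ L.C0T := by
  intro z hz t
  simp only [radialClip_apply, ha z hz t, norm_mul, hz, one_mul]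
  exact (mul_smul_comm _ z (a t)).symm

lemma exists_norm_eq_one_norm_apply_eq_one (a : L.C0T) {t : L.carrier} (ht : a.1 t ≠ 0) :
    ∃ b : L.C0T, ‖b‖ = 1 ∧ ‖b.1 t‖ = 1 := by
  have hc : 0 < ‖a.1 t‖ := norm_pos_iff.mpr ht
  let b : L.C0T := ⟨a.1.radialClip hc, L.radialClip_mem_C0T a.2 hc⟩
  have hbt : ‖b.1 t‖ = 1 := by
    rw [norm_radialClip_apply, max_self, div_self hc.ne']
  refine ⟨b, le_antisymm (norm_radialClip_le_one _ hc) ?_, hbt⟩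
  rw [← hbt, Submodule.coe_norm]
  exact norm_apply_le _ _

end TBundle

section MainStatements

variable [IsTopologicalAddGroup E] [ContinuousSMul ℂ E] [T2Space E]
  [Module ℝ E] [IsScalarTower ℝ ℂ E] [LocallyConvexSpace ℝ E]
  [IsTopologicalAddGroup F] [ContinuousSMul ℂ F] [T2Space F]
  [Module ℝ F] [IsScalarTower ℝ ℂ F] [LocallyConvexSpace ℝ F]

theorem r_globally_bounded_general (L₁ : TBundle E) (L₂ : TBundle F)
    (T : L₁.C0T →ₗ[ℂ] L₂.C0T)
    (r : L₂.carrier → ℝ) (φ : L₂.carrier → L₁.carrier)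
    (hrφ : ∀ s ∈ Lcont T, ∀ a : L₁.C0T, (T a).1 s = (r s : ℂ) * a.1 (φ s)) :
    ∃ M : ℝ, ∀ s ∈ Lcont T, r s ≤ M := by
  obtain ⟨M, hM⟩ :=
    ZeroAtInftyContinuousMap.exists_norm_apply_le_of_continuous_apply (W := L₁.C0T)
      (L₂.C0T.subtype ∘ₗ T)
  refine ⟨M, fun s hs => ?_⟩
  obtain ⟨a, ha⟩ := hs.1
  have haφ : a.1 (φ s) ≠ 0 := fun h => ha (by rw [hrφ s hs a, h, mul_zero])
  obtain ⟨b, hb, hbφ⟩ := L₁.exists_norm_eq_one_norm_apply_eq_one a haφ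
  calc r s ≤ |r s| * ‖b.1 (φ s)‖ := by rw [hbφ, mul_one]; exact le_abs_self _
    _ = ‖(T b).1 s‖ := by rw [hrφ s hs b, norm_mul, Complex.norm_real, Real.norm_eq_abs]
    _ ≤ M * ‖b‖ := hM s hs.2 b
    _ = M := by rw [hb, mul_one]

/-- With `T`, `L₂^c`, `r`, `φ` as in the context: `r` is globally
bounded on `L₂^c`. -/
theorem r_globally_bounded (L₁ : TBundle E) (L₂ : TBundle F)
    (T : L₁.C0T →ₗ[ℂ] L₂.C0T) (hT : OrthogonalityPreserving L₁ L₂ T)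
    (r : L₂.carrier → ℝ) (φ : L₂.carrier → L₁.carrier)
    (hr : ∀ s ∈ Lcont T, 0 < r s)
    (hrφ : ∀ s ∈ Lcont T, ∀ a : L₁.C0T, (T a).1 s = (r s : ℂ) * a.1 (φ s)) :
    ∃ M : ℝ, ∀ s ∈ Lcont T, r s ≤ M :=
  r_globally_bounded_general L₁ L₂ T r φ hrφ

end MainStatements
end
end

section
/- Let L₁ and L₂ be principal 𝕋-bundles and let T : C₀^𝕋(L₁) → C₀^𝕋(L₂) be a (not necessarily continuous) linear orthogonality preserving map that is additionally injective. Then the set L₁ ∩ ⋃_{s ∈ L₂} supp(δ_s∘T) is dense in L₁. -/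
open scoped ZeroAtInfty

noncomputable section

variable {E F : Type*} [AddCommGroup E] [Module ℂ E] [TopologicalSpace E]
  [AddCommGroup F] [Module ℂ F] [TopologicalSpace F]

/-!
If a nonempty open set `O ⊆ L₁` met no support, pick `t₀ ∈ O`. Multiplying the restriction of a
continuous `ℂ`-linear functional that does not vanish at `t₀` by a `𝕋`-invariant bump gives
`a ∈ C₀^𝕋(L₁)` with `a(t₀) ≠ 0` that vanishes outside a compact set `K ⊆ 𝕋 • O`. For each
`s ∈ L₂`, every point of `K` has a `𝕋`-symmetric neighbourhood on which `δ_s ∘ T` kills every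
function; a `𝕋`-invariant partition of unity on `K` subordinate to these neighbourhoods splits `a`
into finitely many such functions, so `T(a)(s) = 0`. Thus `T a = 0`, contradicting injectivity.
Invariant bumps are obtained by taking suprema of ordinary Urysohn functions over `𝕋`-orbits.
-/

open Filter Topology Function
open scoped Pointwise

section OrbitSup

variable {G X : Type*} [Group G] [MulAction G X]

variable (G) in
def orbitSup (f : X → ℝ) (x : X) : ℝ := ⨆ g : G, f (g • x)

variable {f : X → ℝ}

theorem orbitSup_smul (f : X → ℝ) (g : G) (x : X) : orbitSup G f (g • x) = orbitSup G f x := by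
  simp only [orbitSup, smul_smul]
  exact (Equiv.mulRight g).iSup_comp (g := fun h => f (h • x))

theorem support_orbitSup_subset {U : Set X} (hU : ∀ g : G, ∀ x ∈ U, g • x ∈ U)
    (hfU : support f ⊆ U) : support (orbitSup G f) ⊆ U := by
  intro x hx
  by_contra hxU
  have hf0 : ∀ g : G, f (g • x) = 0 := fun g =>
    notMem_support.1 fun h => hxU (by simpa using hU g⁻¹ _ (hfU h))
  simp [orbitSup, hf0] at hx

variable [TopologicalSpace G] [CompactSpace G] [TopologicalSpace X] [ContinuousSMul G X]

theorem continuous_orbitSup (hf : Continuous f) : Continuous (orbitSup G f) := by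
  have := isCompact_univ.continuous_sSup (f := fun x (g : G) => f (g • x))
    (hf.comp (continuous_snd.smul continuous_fst))
  simp only [Set.image_univ] at this
  exact this

theorem le_orbitSup (hf : Continuous f) (x : X) : f x ≤ orbitSup G f x := by
  have hbdd : BddAbove (Set.range fun g : G => f (g • x)) :=
    (isCompact_range (hf.comp (continuous_id.smul continuous_const))).bddAbove
  simpa [orbitSup] using le_ciSup hbdd 1

theorem exists_invariant_bump [CompletelyRegularSpace X] {U : Set X} (hUo : IsOpen U)
    (hU : ∀ g : G, ∀ x ∈ U, g • x ∈ U) {x : X} (hx : x ∈ U) :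
    ∃ φ : C(X, ℝ), (∀ (g : G) y, φ (g • y) = φ y) ∧ (∀ y, 0 ≤ φ y) ∧ 0 < φ x ∧
      support φ ⊆ U := by
  obtain ⟨f, hfc, hfx, hfU⟩ := CompletelyRegularSpace.completely_regular_isOpen x U hUo hx
  set ψ : X → ℝ := fun y => 1 - f y
  have hψc : Continuous ψ := continuous_const.sub (continuous_subtype_val.comp hfc)
  have hψU : support ψ ⊆ U := fun y hy => by
    by_contra hyU
    exact hy (by simp [ψ, hfU hyU])
  refine ⟨⟨orbitSup G ψ, continuous_orbitSup hψc⟩, orbitSup_smul ψ,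
    fun y => (sub_nonneg.2 (f y).2.2).trans (le_orbitSup hψc y), ?_,
    support_orbitSup_subset hU hψU⟩
  calc 0 < ψ x := by simp [ψ, hfx]
    _ ≤ _ := le_orbitSup hψc x

theorem exists_finset_invariant_sum_eq_one [CompletelyRegularSpace X] {K : Set X}
    (hK : IsCompact K) (U : K → Set X) (hUo : ∀ x, IsOpen (U x))
    (hU : ∀ x, ∀ g : G, ∀ y ∈ U x, g • y ∈ U x) (hxU : ∀ x, ↑x ∈ U x) :
    ∃ (t : Finset K) (φ : K → C(X, ℝ)), (∀ x (g : G) y, φ x (g • y) = φ x y) ∧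
      (∀ x, support (φ x) ⊆ U x) ∧ ∀ y ∈ K, ∑ x ∈ t, φ x y = 1 := by
  choose ψ hψinv hψnn hψx hψU using fun x =>
    exists_invariant_bump (G := G) (hUo x) (hU x) (hxU x)
  obtain ⟨t, hKt⟩ := hK.elim_finite_subcover (fun x => {y | 0 < ψ x y})
    (fun x => isOpen_lt continuous_const (ψ x).continuous)
    fun x hx => Set.mem_iUnion.2 ⟨⟨x, hx⟩, hψx ⟨x, hx⟩⟩
  set S : C(X, ℝ) := ∑ x ∈ t, ψ x
  have hSpos : ∀ y ∈ K, 0 < S y := by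
    intro y hy
    obtain ⟨x, hxt, hxy⟩ := Set.mem_iUnion₂.1 (hKt hy)
    rw [ContinuousMap.sum_apply]
    exact lt_of_lt_of_le hxy (Finset.single_le_sum (fun x' _ => hψnn x' y) hxt)
  obtain ⟨c, hc, hcS⟩ := hK.exists_forall_le' S.continuous.continuousOn hSpos
  -- Dividing by `max (S y) c` rather than `S y` keeps the quotients continuous where `S`
  -- vanishes, and changes nothing on `K`.
  have hmax : ∀ y, max (S y) c ≠ 0 := fun y => (hc.trans_le (le_max_right _ _)).ne'
  have hSinv : ∀ (g : G) y, S (g • y) = S y := fun g y => by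
    simp only [S, ContinuousMap.sum_apply, hψinv]
  refine ⟨t, fun x => ⟨fun y => ψ x y / max (S y) c,
    (ψ x).continuous.div (S.continuous.max continuous_const) hmax⟩, ?_, ?_, ?_⟩
  · intro x g y
    simp only [ContinuousMap.coe_mk, hψinv, hSinv]
  · intro x y hy
    exact hψU x (div_ne_zero_iff.1 hy).1
  · intro y hy
    simp only [ContinuousMap.coe_mk, ← Finset.sum_div, ← ContinuousMap.sum_apply]
    rw [max_eq_left (hcS y hy)]
    exact div_self (hSpos y hy).ne'

end OrbitSup

namespace TBundle

variable (L : TBundle E)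

theorem carrier_subset_hat : L.carrier ⊆ L.hat := Set.subset_union_left

instance : CompactSpace L.hat := isCompact_iff_compactSpace.mp L.isCompact_union

instance : MulAction Circle L.hat where
  smul z x := L.hsm z (Circle.norm_coe z) x
  one_smul x := Subtype.ext (one_smul ℂ (x : E))
  mul_smul z w x := Subtype.ext (mul_smul (z : ℂ) (w : ℂ) (x : E))

@[simp]
theorem coe_circle_smul (z : Circle) (x : L.hat) : ((z • x : L.hat) : E) = (z : ℂ) • (x : E) :=
  rfl

instance [ContinuousSMul ℂ E] : ContinuousSMul Circle L.hat :=
  ⟨((continuous_subtype_val.comp continuous_fst).smul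
    (continuous_subtype_val.comp continuous_snd)).subtype_mk _⟩

def toHat : L.carrier → L.hat := Set.inclusion L.carrier_subset_hat

@[simp]
theorem coe_toHat (t : L.carrier) : (L.toHat t : E) = t := rfl

theorem toHat_sm (z : ℂ) (hz : ‖z‖ = 1) (t : L.carrier) :
    L.toHat (L.sm z hz t) = (show Circle from ⟨z, mem_sphere_zero_iff_norm.2 hz⟩) • L.toHat t :=
  rfl

theorem continuous_toHat : Continuous L.toHat := continuous_inclusion L.carrier_subset_hat

theorem isOpenEmbedding_toHat [T1Space E] : IsOpenEmbedding L.toHat := by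
  refine .inclusion L.carrier_subset_hat ?_
  have : (Subtype.val ⁻¹' L.carrier : Set L.hat) = (Subtype.val ⁻¹' {0})ᶜ := by
    ext x
    refine ⟨fun hx (h0 : (x : E) = 0) => L.zero_not_mem (h0 ▸ hx), fun hx => ?_⟩
    exact x.2.resolve_right hx
  rw [this]
  exact (isClosed_singleton.preimage continuous_subtype_val).isOpen_compl

theorem tendsto_coe_cocompact : Tendsto ((↑) : L.carrier → E) (cocompact L.carrier) (𝓝 0) := by
  rw [hasBasis_cocompact.tendsto_iff (nhds_basis_opens 0)]
  rintro N ⟨h0N, hNo⟩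
  refine ⟨Subtype.val ⁻¹' (L.hat \ N), ?_, fun t ht => ?_⟩
  · refine IsInducing.subtypeVal.isCompact_preimage' (L.isCompact_union.diff hNo) ?_
    rintro x ⟨hx, hxN⟩
    exact ⟨⟨x, hx.resolve_right fun h0 => hxN (h0 ▸ h0N)⟩, rfl⟩
  · by_contra h
    exact ht ⟨L.carrier_subset_hat t.2, h⟩

def restrictDual (ℓ : E →L[ℂ] ℂ) : L.C0T :=
  ⟨{ toFun := fun t => ℓ t
     continuous_toFun := ℓ.continuous.comp continuous_subtype_val
     zero_at_infty' := by
       simpa [Function.comp_def] using (ℓ.continuous.tendsto 0).comp L.tendsto_coe_cocompact },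
    fun z _ t => ℓ.map_smul z (t : E)⟩

@[simp]
theorem restrictDual_apply (ℓ : E →L[ℂ] ℂ) (t : L.carrier) : (L.restrictDual ℓ).1 t = ℓ t := rfl

def mulInvariant (a : L.C0T) (φ : C(L.hat, ℝ)) (hφ : ∀ (z : Circle) x, φ (z • x) = φ x) :
    L.C0T :=
  ⟨{ toFun := fun t => a.1 t * φ (L.toHat t)
     continuous_toFun := a.1.continuous.mul
       (Complex.continuous_ofReal.comp (φ.continuous.comp L.continuous_toHat))
     zero_at_infty' := a.1.zero_at_infty'.zero_mul_isBoundedUnder_le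
       (isBoundedUnder_of ⟨‖φ‖, fun t => by simpa using φ.norm_coe_le_norm (L.toHat t)⟩) },
    fun z hz t => by
      show a.1 (L.sm z hz t) * φ (L.toHat (L.sm z hz t)) = z * (a.1 t * φ (L.toHat t))
      rw [L.toHat_sm, hφ, a.2 z hz t, mul_assoc]⟩

@[simp]
theorem mulInvariant_apply (a : L.C0T) (φ : C(L.hat, ℝ)) (hφ : ∀ (z : Circle) x, φ (z • x) = φ x)
    (t : L.carrier) : (L.mulInvariant a φ hφ).1 t = a.1 t * φ (L.toHat t) := rfl

theorem C0T_sum_apply {ι : Type*} (a : ι → L.C0T) (s : Finset ι) (t : L.carrier) :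
    (∑ i ∈ s, a i).1 t = ∑ i ∈ s, (a i).1 t := by
  classical
  induction s using Finset.induction_on with
  | empty => rfl
  | insert i s hi ih =>
    rw [Finset.sum_insert hi, Finset.sum_insert hi, Submodule.coe_add,
      ZeroAtInftyContinuousMap.add_apply, ih]

end TBundle

theorem smul_mem_suppDelta {L₁ : TBundle E} {L₂ : TBundle F} (T : L₁.C0T →ₗ[ℂ] L₂.C0T)
    (s : L₂.carrier) {z : ℂ} (hz : ‖z‖ = 1) {x : E} (hx : x ∈ suppDelta T s) :
    z • x ∈ suppDelta T s := by
  refine ⟨L₁.hat_smul_mem z hz hx.1, fun U hzxU hU hUo => hx.2 U ?_ hU hUo⟩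
  have hz0 : z ≠ 0 := norm_ne_zero_iff.1 (hz ▸ one_ne_zero)
  simpa [smul_smul, inv_mul_cancel₀ hz0] using hU z⁻¹ (by simp [hz]) _ hzxU

theorem apply_eq_zero_of_forall_notMem_suppDelta [ContinuousSMul ℂ E] [T2Space E]
    {L₁ : TBundle E} {L₂ : TBundle F} (T : L₁.C0T →ₗ[ℂ] L₂.C0T) (s : L₂.carrier)
    {a : L₁.C0T} {K : Set L₁.hat} (hK : IsCompact K) (ha : ∀ t, L₁.toHat t ∉ K → a.1 t = 0)
    (hKs : ∀ x ∈ K, (x : E) ∉ suppDelta T s) : (T a).1 s = 0 := by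
  have hnull : ∀ x : K, ∃ U : Set E, ((x : L₁.hat) : E) ∈ U ∧ TSymm U ∧
      (∃ V : Set E, IsOpen V ∧ U = V ∩ L₁.hat) ∧
      ∀ b : L₁.C0T, (∀ t : L₁.carrier, (t : E) ∉ U → b.1 t = 0) → (T b).1 s = 0 := by
    intro x
    by_contra! h
    exact hKs x x.2 ⟨(x : L₁.hat).2, h⟩
  choose U hxU hUsymm hUo hUnull using hnull
  have hUo' : ∀ x, IsOpen (Subtype.val ⁻¹' U x : Set L₁.hat) := fun x => by
    obtain ⟨V, hV, hUV⟩ := hUo x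
    rw [hUV, Set.preimage_inter, Subtype.coe_preimage_self, Set.inter_univ]
    exact hV.preimage continuous_subtype_val
  obtain ⟨t, φ, hφinv, hφU, hφK⟩ := exists_finset_invariant_sum_eq_one (G := Circle) hK
    (fun x => Subtype.val ⁻¹' U x) hUo' (fun x g y hy => hUsymm x g g.norm_coe _ hy) hxU
  set b : K → L₁.C0T := fun x => L₁.mulInvariant a (φ x) (hφinv x)
  have hab : a = ∑ x ∈ t, b x := by
    ext y
    rw [L₁.C0T_sum_apply]
    simp only [b, TBundle.mulInvariant_apply, ← Finset.mul_sum]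
    by_cases hy : L₁.toHat y ∈ K
    · simp [← Complex.ofReal_sum, hφK _ hy]
    · simp [ha y hy]
  rw [hab, map_sum, L₂.C0T_sum_apply]
  refine Finset.sum_eq_zero fun x _ => hUnull x _ fun y hy => ?_
  have : φ x (L₁.toHat y) = 0 := notMem_support.1 fun h => hy (hφU x h)
  simp [b, this]

theorem TBundle.exists_C0T_apply_ne_zero_vanishing_off_orbit [IsTopologicalAddGroup E]
    [ContinuousSMul ℂ E] [T2Space E] [Module ℝ E] [IsScalarTower ℝ ℂ E] [LocallyConvexSpace ℝ E]
    (L : TBundle E) {O : Set L.carrier} (hO : IsOpen O) {t₀ : L.carrier} (ht₀ : t₀ ∈ O) :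
    ∃ (a : L.C0T) (K : Set L.hat), IsCompact K ∧ (∀ t, L.toHat t ∉ K → a.1 t = 0) ∧
      a.1 t₀ ≠ 0 ∧ ∀ x ∈ K, ∃ z : Circle, z • x ∈ L.toHat '' O := by
  have ht₀0 : (0 : E) ≠ t₀ := fun h => L.zero_not_mem (h ▸ t₀.2)
  obtain ⟨ℓ, hℓ⟩ := RCLike.geometric_hahn_banach_point_point (𝕜 := ℂ) ht₀0
  have hℓt₀ : ℓ t₀ ≠ 0 := fun h => by simp [h] at hℓ
  obtain ⟨C, hC, hCc, hCO⟩ := exists_mem_nhds_isClosed_subset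
    ((L.isOpenEmbedding_toHat.isOpenMap O hO).mem_nhds ⟨t₀, ht₀, rfl⟩)
  set W : Set L.hat := (Set.univ : Set Circle) • interior C
  have hWinv : ∀ (g : Circle), ∀ x ∈ W, g • x ∈ W := by
    rintro g _ ⟨z, -, x, hx, rfl⟩
    exact ⟨g * z, trivial, x, hx, mul_smul g z x⟩
  obtain ⟨φ, hφinv, -, hφt₀, hφW⟩ := exists_invariant_bump isOpen_interior.smul_left hWinv
    (x := L.toHat t₀) ⟨1, trivial, _, mem_interior_iff_mem_nhds.2 hC, one_smul _ _⟩
  refine ⟨L.mulInvariant (L.restrictDual ℓ) φ hφinv, (Set.univ : Set Circle) • C,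
    isCompact_univ.smul_set hCc.isCompact, fun t ht => ?_, ?_, ?_⟩
  · have : φ (L.toHat t) = 0 := notMem_support.1 fun h =>
      ht (Set.smul_subset_smul_left interior_subset (hφW h))
    simp [this]
  · simp [hℓt₀, hφt₀.ne']
  · rintro _ ⟨z, -, x, hx, rfl⟩
    exact ⟨z⁻¹, by simpa using hCO hx⟩

section MainStatements

variable [IsTopologicalAddGroup E] [ContinuousSMul ℂ E] [T2Space E]
  [Module ℝ E] [IsScalarTower ℝ ℂ E] [LocallyConvexSpace ℝ E]
  [IsTopologicalAddGroup F] [ContinuousSMul ℂ F] [T2Space F]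
  [Module ℝ F] [IsScalarTower ℝ ℂ F] [LocallyConvexSpace ℝ F]

theorem suppDelta_union_dense_general (L₁ : TBundle E) (L₂ : TBundle F)
    (T : L₁.C0T →ₗ[ℂ] L₂.C0T)
    (hinj : Function.Injective T) :
    Dense {t : L₁.carrier | ∃ s : L₂.carrier, (t : E) ∈ suppDelta T s} := by
  refine dense_iff_inter_open.2 fun O hO ⟨t₀, ht₀⟩ => ?_
  by_contra hdisj
  obtain ⟨a, K, hK, ha, hat₀, hKO⟩ := L₁.exists_C0T_apply_ne_zero_vanishing_off_orbit hO ht₀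
  have hTa : T a = 0 := by
    refine Subtype.ext <| ZeroAtInftyContinuousMap.ext fun s =>
      apply_eq_zero_of_forall_notMem_suppDelta T s hK ha fun x hx hxs => hdisj ?_
    obtain ⟨z, ⟨t, ht, hzx⟩⟩ := hKO x hx
    refine ⟨t, ht, s, ?_⟩
    rw [← L₁.coe_toHat t, hzx, L₁.coe_circle_smul]
    exact smul_mem_suppDelta T s z.norm_coe hxs
  exact hat₀ (by rw [hinj (hTa.trans (map_zero T).symm)]; rfl)

/-- For an injective linear orthogonality preserving map
`T : C₀^𝕋(L₁) → C₀^𝕋(L₂)`, the set `L₁ ∩ ⋃_{s ∈ L₂} supp(δ_s ∘ T)` is dense in `L₁`. -/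
theorem suppDelta_union_dense (L₁ : TBundle E) (L₂ : TBundle F)
    (T : L₁.C0T →ₗ[ℂ] L₂.C0T) (hT : OrthogonalityPreserving L₁ L₂ T)
    (hinj : Function.Injective T) :
    Dense {t : L₁.carrier | ∃ s : L₂.carrier, (t : E) ∈ suppDelta T s} :=
  suppDelta_union_dense_general L₁ L₂ T hinj

end MainStatements
end
end

section
/- Let L be a principal 𝕋-bundle, t₀ ∈ L, and let W be a 𝕋-symmetric open neighbourhood of t₀ in L which is contained in a compact 𝕋-symmetric subset of L. Then there exists a function h ∈ C₀^𝕋(L) with ‖h‖ = 1 satisfying h(t₀) = 1 and h(t) = 0 for all t ∈ L \ W. -/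
/-!
A continuous `ℂ`-linear functional `φ` with `φ t₀ = 1` (Hahn–Banach), pushed radially into the
closed unit disc, gives a continuous `𝕋`-equivariant `u` with `|u| ≤ 1` and `u t₀ = 1`. On the
compact Hausdorff space `L ∪ {0}` an Urysohn function that is `1` at `t₀` and `0` off `W` becomes
`𝕋`-invariant, and stays continuous, after taking its supremum over the compact group `𝕋`. The
product `h = u ψ` is equivariant, vanishes off `W ⊆ K` (so has compact support), satisfies
`|h| ≤ 1` and `h t₀ = 1`.
-/

open scoped ZeroAtInfty

noncomputable section

variable {E F : Type*} [AddCommGroup E] [Module ℂ E] [TopologicalSpace E]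
  [AddCommGroup F] [Module ℂ F] [TopologicalSpace F]

open Set

instance SubMulAction.continuousSMul {G α : Type*} [Monoid G] [MulAction G α]
    [TopologicalSpace G] [TopologicalSpace α] [ContinuousSMul G α] (p : SubMulAction G α) :
    ContinuousSMul G p :=
  ⟨(continuous_fst.smul (continuous_subtype_val.comp continuous_snd)).subtype_mk _⟩

theorem exists_continuous_invariant_zero_one {G X : Type*} [Group G] [TopologicalSpace G]
    [CompactSpace G] [TopologicalSpace X] [NormalSpace X] [T1Space X] [MulAction G X]
    [ContinuousSMul G X] {s : Set X} (hs : IsClosed s) (hsG : ∀ g : G, ∀ x ∈ s, g • x ∈ s)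
    {x₀ : X} (hx₀ : x₀ ∉ s) :
    ∃ f : C(X, ℝ), EqOn f 0 s ∧ f x₀ = 1 ∧ (∀ x, f x ∈ Icc (0 : ℝ) 1) ∧
      ∀ (g : G) (x : X), f (g • x) = f x := by
  obtain ⟨f₀, hf₀s, hf₀x₀, hf₀⟩ := exists_continuous_zero_one_of_isClosed hs isClosed_singleton
    (disjoint_singleton_right.mpr hx₀)
  set f : X → ℝ := fun x => ⨆ g : G, f₀ (g • x)
  have hbdd : ∀ x, BddAbove (range fun g : G => f₀ (g • x)) := fun x =>
    ⟨1, forall_mem_range.mpr fun g => (hf₀ _).2⟩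
  have hf : Continuous f := by
    have := isCompact_univ.continuous_sSup (f := fun (x : X) (g : G) => f₀ (g • x)) (by fun_prop)
    simpa only [image_univ, sSup_range] using this
  refine ⟨⟨f, hf⟩, fun x hx => ?_, ?_, fun x => ⟨?_, ?_⟩, fun g x => ?_⟩
  · simp only [ContinuousMap.coe_mk, Pi.zero_apply, f, hf₀s (hsG _ x hx), ciSup_const]
  · refine le_antisymm (ciSup_le fun g => (hf₀ _).2) ?_
    have h1 := le_ciSup (hbdd x₀) 1
    rw [one_smul, hf₀x₀ rfl] at h1
    exact h1
  · exact (hf₀ _).1.trans (le_ciSup (hbdd x) 1)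
  · exact ciSup_le fun g => (hf₀ _).2
  · simpa only [ContinuousMap.coe_mk, f, smul_smul, Equiv.coe_mulRight] using
      (Equiv.mulRight g).iSup_comp (g := fun g => f₀ (g • x))

section unitBallRetraction

variable {V : Type*} [NormedAddCommGroup V] [NormedSpace ℝ V]

def unitBallRetraction (v : V) : V := (max 1 ‖v‖)⁻¹ • v

theorem continuous_unitBallRetraction : Continuous (unitBallRetraction (V := V)) := by
  refine Continuous.smul (Continuous.inv₀ (by fun_prop) fun v => ?_) continuous_id
  exact (zero_lt_one.trans_le (le_max_left 1 ‖v‖)).ne'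

theorem norm_unitBallRetraction_le_one (v : V) : ‖unitBallRetraction v‖ ≤ 1 := by
  have hpos : 0 < max 1 ‖v‖ := zero_lt_one.trans_le (le_max_left _ _)
  rw [unitBallRetraction, norm_smul, norm_inv, Real.norm_of_nonneg hpos.le,
    inv_mul_le_one₀ hpos]
  exact le_max_right _ _

theorem unitBallRetraction_of_norm_le_one {v : V} (hv : ‖v‖ ≤ 1) : unitBallRetraction v = v := by
  simp [unitBallRetraction, max_eq_left hv]

theorem unitBallRetraction_smul {𝕜 : Type*} [NormedField 𝕜] [NormedSpace 𝕜 V]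
    [SMulCommClass ℝ 𝕜 V] {c : 𝕜} (hc : ‖c‖ = 1) (v : V) :
    unitBallRetraction (c • v) = c • unitBallRetraction v := by
  rw [unitBallRetraction, unitBallRetraction, norm_smul, hc, one_mul, smul_comm]

end unitBallRetraction

instance RCLike.separatingDual {𝕜 G : Type*} [RCLike 𝕜] [TopologicalSpace G] [AddCommGroup G]
    [IsTopologicalAddGroup G] [Module 𝕜 G] [ContinuousSMul 𝕜 G] [Module ℝ G]
    [IsScalarTower ℝ 𝕜 G] [LocallyConvexSpace ℝ G] [T1Space G] : SeparatingDual 𝕜 G :=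
  ⟨fun x hx => by
    obtain ⟨f, hf⟩ := RCLike.geometric_hahn_banach_point_point (𝕜 := 𝕜) hx.symm
    exact ⟨f, fun h => by simp [h] at hf⟩⟩

theorem exists_continuous_equivariant_norm_le_one_eq_one [SeparatingDual ℂ E] {x : E}
    (hx : x ≠ 0) :
    ∃ u : E → ℂ, Continuous u ∧ u x = 1 ∧ (∀ y, ‖u y‖ ≤ 1) ∧
      ∀ (z : ℂ), ‖z‖ = 1 → ∀ y, u (z • y) = z * u y := by
  obtain ⟨φ, hφ⟩ := SeparatingDual.exists_eq_one (R := ℂ) hx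
  refine ⟨fun y => unitBallRetraction (φ y), continuous_unitBallRetraction.comp φ.continuous,
    ?_, fun y => norm_unitBallRetraction_le_one _, fun z hz y => ?_⟩
  · simp only [hφ, unitBallRetraction_of_norm_le_one norm_one.le]
  · exact (congrArg unitBallRetraction (φ.map_smul z y)).trans (unitBallRetraction_smul hz _)

theorem ZeroAtInftyContinuousMap.norm_eq_of_forall_norm_le {X β : Type*} [TopologicalSpace X]
    [SeminormedAddCommGroup β] (f : C₀(X, β)) {r : ℝ} (hle : ∀ x, ‖f x‖ ≤ r) {x₀ : X}
    (hx₀ : ‖f x₀‖ = r) : ‖f‖ = r := by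
  rw [← ZeroAtInftyContinuousMap.norm_toBCF_eq_norm]
  refine le_antisymm ((BoundedContinuousFunction.norm_le (hx₀ ▸ norm_nonneg _)).mpr hle) ?_
  exact hx₀ ▸ BoundedContinuousFunction.norm_coe_le_norm f.toBCF x₀

namespace TBundle

variable (L : TBundle E)

theorem ne_zero (t : L.carrier) : (t : E) ≠ 0 := fun h => L.zero_not_mem (h ▸ t.2)

def hatSubMulAction : SubMulAction Circle E where
  carrier := L.hat
  smul_mem' c _ hx := L.hat_smul_mem c c.norm_coe hx

theorem exists_invariant_bump [ContinuousSMul ℂ E] [T2Space E] (t₀ : L.carrier) {V : Set E}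
    (hV : IsOpen V) (hsymm : TSymm (V ∩ L.carrier)) (ht₀ : (t₀ : E) ∈ V) :
    ∃ ψ : C(L.carrier, ℝ), ψ t₀ = 1 ∧ (∀ t, ψ t ∈ Icc (0 : ℝ) 1) ∧
      (∀ t : L.carrier, (t : E) ∉ V → ψ t = 0) ∧ ∀ z (hz : ‖z‖ = 1) t, ψ (L.sm z hz t) = ψ t := by
  have : CompactSpace L.hatSubMulAction := isCompact_iff_compactSpace.mp L.isCompact_union
  set s : Set L.hatSubMulAction := {x | (x : E) ∉ V ∩ L.carrier}
  have hs : IsClosed s := by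
    have hsc : sᶜ = (↑) ⁻¹' (V \ {0}) := by
      ext ⟨x, hx | hx⟩
      · simp [s, hx, L.ne_zero ⟨x, hx⟩]
      · simp [s, mem_singleton_iff.mp hx, L.zero_not_mem]
    exact isOpen_compl_iff.mp (hsc ▸ (hV.sdiff isClosed_singleton).preimage continuous_subtype_val)
  have hsG : ∀ c : Circle, ∀ x ∈ s, c • x ∈ s := fun c x hx hcx => hx <| by
    have hc : ‖(c⁻¹ : ℂ)‖ = 1 := by rw [norm_inv, c.norm_coe, inv_one]
    simpa [Circle.smul_def, smul_smul] using hsymm _ hc _ hcx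
  obtain ⟨f, hfs, hft₀, hf01, hfG⟩ :=
    exists_continuous_invariant_zero_one hs hsG (x₀ := ⟨t₀, Or.inl t₀.2⟩) (not_not.mpr ⟨ht₀, t₀.2⟩)
  refine ⟨f.comp ⟨fun t => ⟨t, Or.inl t.2⟩, by fun_prop⟩, hft₀, fun t => hf01 _,
    fun t ht => hfs fun h => ht h.1,
    fun z hz t => hfG ⟨z, mem_sphere_zero_iff_norm.mpr hz⟩ ⟨t, Or.inl t.2⟩⟩

theorem exists_C0T_eq_of_equivariant [T2Space E] {g : L.carrier → ℂ} (hg : Continuous g) {K : Set E}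
    (hK : IsCompact K) (hKL : K ⊆ L.carrier) (hgK : ∀ t : L.carrier, (t : E) ∉ K → g t = 0)
    (hequiv : ∀ z (hz : ‖z‖ = 1) t, g (L.sm z hz t) = z * g t) :
    ∃ a : L.C0T, ∀ t, a.1 t = g t := by
  have hK' : IsCompact ((↑) ⁻¹' K : Set L.carrier) := by
    rwa [Subtype.isCompact_iff, Subtype.image_preimage_coe, inter_eq_right.mpr hKL]
  have hcs : HasCompactSupport g := HasCompactSupport.intro hK' hgK
  exact ⟨⟨⟨⟨g, hg⟩, hcs.is_zero_at_infty⟩, hequiv⟩, fun _ => rfl⟩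

end TBundle

section MainStatements

variable [IsTopologicalAddGroup E] [ContinuousSMul ℂ E] [T2Space E]
  [Module ℝ E] [IsScalarTower ℝ ℂ E] [LocallyConvexSpace ℝ E]
  [IsTopologicalAddGroup F] [ContinuousSMul ℂ F] [T2Space F]
  [Module ℝ F] [IsScalarTower ℝ ℂ F] [LocallyConvexSpace ℝ F]

/-- (Urysohn-type lemma for `C₀^𝕋(L)`.) If `W` is a `𝕋`-symmetric
relatively open neighbourhood of `t₀` in `L` contained in a compact `𝕋`-symmetric
subset of `L`, then there is `h ∈ C₀^𝕋(L)` of norm one with `h(t₀) = 1` and `h ≡ 0`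
off `W`. -/
theorem exists_urysohn_equivariant (L : TBundle E) (t₀ : L.carrier) (W : Set E)
    (hWopen : ∃ V : Set E, IsOpen V ∧ W = V ∩ L.carrier)
    (hWsymm : TSymm W) (ht₀ : (t₀ : E) ∈ W)
    (hK : ∃ K : Set E, K ⊆ L.carrier ∧ IsCompact K ∧ TSymm K ∧ W ⊆ K) :
    ∃ h : L.C0T, ‖h.1‖ = 1 ∧ h.1 t₀ = 1 ∧
      ∀ t : L.carrier, (t : E) ∉ W → h.1 t = 0 := by
  obtain ⟨V, hV, rfl⟩ := hWopen
  obtain ⟨K, hKL, hKc, -, hWK⟩ := hK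
  obtain ⟨u, hu, hut₀, hu_le, hu_smul⟩ :=
    exists_continuous_equivariant_norm_le_one_eq_one (L.ne_zero t₀)
  obtain ⟨ψ, hψt₀, hψ01, hψV, hψ_smul⟩ := L.exists_invariant_bump t₀ hV hWsymm ht₀.1
  have hψW : ∀ t : L.carrier, (t : E) ∉ V ∩ L.carrier → ψ t = 0 := fun t ht =>
    hψV t fun htV => ht ⟨htV, t.2⟩
  obtain ⟨h, hh⟩ := L.exists_C0T_eq_of_equivariant (g := fun t => u t * ψ t) (by fun_prop) hKc hKL
    (fun t htK => by rw [hψW t fun htW => htK (hWK htW), Complex.ofReal_zero, mul_zero])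
    (fun z hz t => by simp only [TBundle.sm, hu_smul z hz, ← hψ_smul z hz t, mul_assoc])
  have hh_le : ∀ t, ‖h.1 t‖ ≤ 1 := fun t => by
    rw [hh, norm_mul, Complex.norm_real, Real.norm_of_nonneg (hψ01 t).1]
    exact mul_le_one₀ (hu_le t) (hψ01 t).1 (hψ01 t).2
  have hht₀ : h.1 t₀ = 1 := by rw [hh, hut₀, hψt₀, Complex.ofReal_one, one_mul]
  refine ⟨h, h.1.norm_eq_of_forall_norm_le hh_le (by rw [hht₀, norm_one]), hht₀, fun t ht => ?_⟩
  rw [hh, hψW t ht, Complex.ofReal_zero, mul_zero]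

end MainStatements
end
end
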